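/- arXiv:1712.00270 — 5 statements merged into one kernel-verified Lean document; each statement's English description precedes it below -/
import Mathlib

section
/- If both players apply maximal privacy protection, i.e., (p1, p2) = (1, 1), then this strategy profile is a Nash Equilibrium of the Collaborative Learning game: neither player can achieve a strictly positive utility by unilaterally deviating. -/
/-- (1,1) (maximal privacy for both players) is a Nash Equilibrium of the
Collaborative Learning game, and neither player can achieve strictly positive utility
by unilaterally deviating. -/
theorem col_trivial_NE
    (b : ℝ → ℝ → ℝ) (c : ℝ → ℝ) (Φ1 Φ2 : ℝ → ℝ → ℝ)
    (θ1 θ2 B1 B2 C1 C2 : ℝ)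
    (hB1 : 0 < B1) (hB2 : 0 < B2) (hC1 : 0 ≤ C1) (hC2 : 0 ≤ C2)
    (hc0 : c 0 = 1) (hc1 : c 1 = 0)
    (hc_nonneg : ∀ p ∈ Set.Icc (0:ℝ) 1, 0 ≤ c p)
    (hb_nonneg : ∀ θ φ : ℝ, 0 ≤ b θ φ)
    (hb0 : ∀ θ φ : ℝ, θ ≤ φ → b θ φ = 0)
    (hΦmax2 : ∀ p1 ∈ Set.Icc (0:ℝ) 1, θ1 ≤ Φ1 p1 1 ∧ θ2 ≤ Φ2 p1 1)
    (hΦmax1 : ∀ p2 ∈ Set.Icc (0:ℝ) 1, θ1 ≤ Φ1 1 p2 ∧ θ2 ≤ Φ2 1 p2)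
    (u1 u2 : ℝ → ℝ → ℝ)
    (hu1 : ∀ p1 p2, u1 p1 p2 = B1 * b θ1 (Φ1 p1 p2) - C1 * c p1)
    (hu2 : ∀ p1 p2, u2 p1 p2 = B2 * b θ2 (Φ2 p1 p2) - C2 * c p2) :
    (∀ p1 ∈ Set.Icc (0:ℝ) 1, u1 p1 1 ≤ u1 1 1) ∧
    (∀ p2 ∈ Set.Icc (0:ℝ) 1, u2 1 p2 ≤ u2 1 1) ∧
    (∀ p1 ∈ Set.Icc (0:ℝ) 1, ¬ (0 < u1 p1 1)) ∧
    (∀ p2 ∈ Set.Icc (0:ℝ) 1, ¬ (0 < u2 1 p2)) := by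
  have h1 : ∀ p1 ∈ Set.Icc (0:ℝ) 1, u1 p1 1 ≤ 0 := by
    intro p1 hp1
    rw [hu1, hb0 θ1 _ (hΦmax2 p1 hp1).1]
    have := mul_nonneg hC1 (hc_nonneg p1 hp1)
    linarith
  have h2 : ∀ p2 ∈ Set.Icc (0:ℝ) 1, u2 1 p2 ≤ 0 := by
    intro p2 hp2
    rw [hu2, hb0 θ2 _ (hΦmax1 p2 hp2).2]
    have := mul_nonneg hC2 (hc_nonneg p2 hp2)
    linarith
  have e1 : u1 1 1 = 0 := by rw [hu1, hb0 θ1 _ (hΦmax1 1 (by norm_num)).1, hc1]; ring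
  have e2 : u2 1 1 = 0 := by rw [hu2, hb0 θ2 _ (hΦmax1 1 (by norm_num)).2, hc1]; ring
  exact ⟨fun p1 hp1 => e1 ▸ h1 p1 hp1, fun p2 hp2 => e2 ▸ h2 p2 hp2,
    fun p1 hp1 h => absurd h (not_lt.2 (h1 p1 hp1)),
    fun p2 hp2 h => absurd h (not_lt.2 (h2 p2 hp2))⟩
end

section
/- If the utility functions of a two-player game on [0,1]² satisfy ∂²u_1/∂p1∂p2 = ∂²u_2/∂p1∂p2 everywhere (i.e., the game is an exact potential game in the sense of Monderer–Shapley's second-derivative characterization for smooth games), then the game admits at least one pure-strategy Nash Equilibrium. -/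
/-!
If the mixed partials of `u₁` and `u₂` agree, the mixed partial of `d = u₁ - u₂` vanishes, so
`d a b - d a' b` does not depend on `b`. Then `P a b = u₁ a b - u₁ 0 b + u₂ 0 b` is an exact
potential: unilateral deviations of player 1 change `P` as they change `u₁`, and those of player 2
change it as they change `u₂`. A maximizer of the continuous `P` on the compact square is
therefore a pure Nash equilibrium.
-/

open Function Set

section Potential

variable {α β : Type*}

def IsPureNashEquilibrium (S : Set α) (T : Set β) (u₁ u₂ : α → β → ℝ) (a : α) (b : β) : Prop :=
  (∀ a' ∈ S, u₁ a' b ≤ u₁ a b) ∧ ∀ b' ∈ T, u₂ a b' ≤ u₂ a b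

structure IsExactPotential (u₁ u₂ P : α → β → ℝ) : Prop where
  fst : ∀ a a' b, u₁ a b - u₁ a' b = P a b - P a' b
  snd : ∀ a b b', u₂ a b - u₂ a b' = P a b - P a b'

variable {u₁ u₂ P : α → β → ℝ} {S : Set α} {T : Set β}

theorem IsExactPotential.isPureNashEquilibrium_of_isMaxOn (hP : IsExactPotential u₁ u₂ P)
    {a : α} {b : β} (ha : a ∈ S) (hb : b ∈ T) (hmax : IsMaxOn (uncurry P) (S ×ˢ T) (a, b)) :
    IsPureNashEquilibrium S T u₁ u₂ a b := by
  refine ⟨fun a' ha' => ?_, fun b' hb' => ?_⟩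
  · have : P a' b ≤ P a b := isMaxOn_iff.mp hmax _ (mk_mem_prod ha' hb)
    linarith [hP.fst a a' b]
  · have : P a b' ≤ P a b := isMaxOn_iff.mp hmax _ (mk_mem_prod ha hb')
    linarith [hP.snd a b b']

theorem IsExactPotential.exists_isPureNashEquilibrium [TopologicalSpace α] [TopologicalSpace β]
    (hP : IsExactPotential u₁ u₂ P) (hS : IsCompact S) (hT : IsCompact T)
    (hS₀ : S.Nonempty) (hT₀ : T.Nonempty) (hcont : ContinuousOn (uncurry P) (S ×ˢ T)) :
    ∃ a ∈ S, ∃ b ∈ T, IsPureNashEquilibrium S T u₁ u₂ a b := by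
  obtain ⟨⟨a, b⟩, ⟨ha, hb⟩, hmax⟩ := (hS.prod hT).exists_isMaxOn (hS₀.prod hT₀) hcont
  exact ⟨a, ha, b, hb, hP.isPureNashEquilibrium_of_isMaxOn ha hb hmax⟩

theorem isExactPotential_of_sub_sub_sub_eq
    (hd : ∀ a a' b b', (u₁ a b - u₂ a b) - (u₁ a' b - u₂ a' b) =
      (u₁ a b' - u₂ a b') - (u₁ a' b' - u₂ a' b')) (a₀ : α) :
    IsExactPotential u₁ u₂ fun a b => u₁ a b - u₁ a₀ b + u₂ a₀ b where
  fst a a' b := by ring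
  snd a b b' := by linarith [hd a a₀ b b']

end Potential

section MixedPartials

theorem sub_sub_sub_eq_of_hasDerivAt_deriv_zero {f : ℝ → ℝ → ℝ}
    (hf : ∀ a, Differentiable ℝ (f a)) (hmix : ∀ x y, HasDerivAt (fun a => deriv (f a) y) 0 x)
    (a a' b b' : ℝ) : f a b - f a' b = f a b' - f a' b' := by
  have hslope : ∀ y, deriv (f a) y = deriv (f a') y := fun y =>
    is_const_of_deriv_eq_zero (fun x => (hmix x y).differentiableAt)
      (fun x => (hmix x y).deriv) a a'
  have hderiv : ∀ y, HasDerivAt (fun t => f a t - f a' t) 0 y := fun y => by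
    simpa only [hslope y, sub_self] using (hf a y).hasDerivAt.fun_sub (hf a' y).hasDerivAt
  exact is_const_of_deriv_eq_zero (fun y => (hderiv y).differentiableAt)
    (fun y => (hderiv y).deriv) b b'

variable {u : ℝ → ℝ → ℝ}

theorem Differentiable.hasDerivAt_apply_left (hu : Differentiable ℝ (uncurry u)) (a y : ℝ) :
    HasDerivAt (u a) (fderiv ℝ (uncurry u) (a, y) (0, 1)) y :=
  (hu (a, y)).hasFDerivAt.comp_hasDerivAt y ((hasDerivAt_const y a).prodMk (hasDerivAt_id y))

theorem Differentiable.differentiable_apply_left (hu : Differentiable ℝ (uncurry u)) (a : ℝ) :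
    Differentiable ℝ (u a) :=
  fun y => (hu.hasDerivAt_apply_left a y).differentiableAt

theorem ContDiff.differentiable_deriv_apply_left (hu : ContDiff ℝ 2 (uncurry u)) (y : ℝ) :
    Differentiable ℝ fun a => deriv (u a) y := by
  have hslope : (fun a => deriv (u a) y) = fun a => fderiv ℝ (uncurry u) (a, y) (0, 1) :=
    funext fun a => ((hu.differentiable two_ne_zero).hasDerivAt_apply_left a y).deriv
  have hfderiv : ContDiff ℝ 1 fun a => fderiv ℝ (uncurry u) (a, y) :=
    (hu.fderiv_right one_add_one_eq_two.le).comp (contDiff_id.prodMk contDiff_const)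
  rw [hslope]
  exact ((ContinuousLinearMap.apply ℝ ℝ ((0 : ℝ), (1 : ℝ))).contDiff.comp hfderiv).differentiable
    one_ne_zero

theorem hasDerivAt_deriv_sub_zero_of_deriv_deriv_eq {u₁ u₂ : ℝ → ℝ → ℝ}
    (hu₁ : ContDiff ℝ 2 (uncurry u₁)) (hu₂ : ContDiff ℝ 2 (uncurry u₂))
    (h : ∀ x y, deriv (fun a => deriv (u₁ a) y) x = deriv (fun a => deriv (u₂ a) y) x) (x y : ℝ) :
    HasDerivAt (fun a => deriv (fun b => u₁ a b - u₂ a b) y) 0 x := by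
  have hsplit : (fun a => deriv (fun b => u₁ a b - u₂ a b) y) =
      fun a => deriv (u₁ a) y - deriv (u₂ a) y :=
    funext fun a => deriv_fun_sub ((hu₁.differentiable two_ne_zero).differentiable_apply_left a y)
      ((hu₂.differentiable two_ne_zero).differentiable_apply_left a y)
  have := (hu₁.differentiable_deriv_apply_left y x).hasDerivAt.fun_sub
    (hu₂.differentiable_deriv_apply_left y x).hasDerivAt
  rwa [h x y, sub_self, ← hsplit] at this

end MixedPartials

/-- A two-player game on [0,1]² with twice continuously differentiable
utilities whose mixed second partial derivatives coincide everywhere (the smooth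
potential-game condition of Monderer–Shapley) admits at least one pure-strategy
Nash Equilibrium. -/
theorem smooth_potential_game_has_NE
    (u1 u2 : ℝ → ℝ → ℝ)
    (h1 : ContDiff ℝ 2 (fun p : ℝ × ℝ => u1 p.1 p.2))
    (h2 : ContDiff ℝ 2 (fun p : ℝ × ℝ => u2 p.1 p.2))
    (hmixed : ∀ x y : ℝ,
      deriv (fun a => deriv (fun b => u1 a b) y) x =
      deriv (fun a => deriv (fun b => u2 a b) y) x) :
    ∃ p1 ∈ Set.Icc (0:ℝ) 1, ∃ p2 ∈ Set.Icc (0:ℝ) 1,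
      (∀ q1 ∈ Set.Icc (0:ℝ) 1, u1 q1 p2 ≤ u1 p1 p2) ∧
      (∀ q2 ∈ Set.Icc (0:ℝ) 1, u2 p1 q2 ≤ u2 p1 p2) := by
  have hd := sub_sub_sub_eq_of_hasDerivAt_deriv_zero
    (fun a => ((h1.differentiable two_ne_zero).differentiable_apply_left a).sub
      ((h2.differentiable two_ne_zero).differentiable_apply_left a))
    (hasDerivAt_deriv_sub_zero_of_deriv_deriv_eq h1 h2 hmixed)
  have hP := isExactPotential_of_sub_sub_sub_eq hd 0
  have hcont : Continuous fun p : ℝ × ℝ => u1 p.1 p.2 - u1 0 p.2 + u2 0 p.2 :=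
    (h1.continuous.sub (h1.continuous.comp (continuous_const.prodMk continuous_snd))).add
      (h2.continuous.comp (continuous_const.prodMk continuous_snd))
  exact hP.exists_isPureNashEquilibrium isCompact_Icc isCompact_Icc (nonempty_Icc.2 zero_le_one)
    (nonempty_Icc.2 zero_le_one) hcont.continuousOn
end

section
/- The Collaborative Learning game has at least one pure-strategy Nash Equilibrium if the condition b''(Φ)·(∂Φ_1/∂p1 · ∂Φ_1/∂p2 − ∂Φ_2/∂p1 · ∂Φ_2/∂p2) = b'(Φ)·(∂²Φ_2/∂p1∂p2 − ∂²Φ_1/∂p1∂p2) holds, where the benefit function is evaluated at the respective Φ_n. In particular, this follows because under this condition the normalized game with utilities ũ_n = u_n/B_n is an exact potential game. -/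
/-! By the chain rule, the condition says that the benefit terms `b θₙ ∘ Φₙ` of the two players
have the same mixed partial `∂₁∂₂`. Their difference therefore splits as `f p₁ + g p₂`, and so does
the difference `ũ₂ - ũ₁` of the normalized utilities; then `ũ₁ + g` is an exact potential of the
normalized game, and a maximizer of this continuous potential on the compact square `[0,1]²` is a
pure Nash equilibrium. -/

open Function

section Partials

variable {F G : ℝ → ℝ → ℝ}

noncomputable def mixedPartial (F : ℝ → ℝ → ℝ) (x y : ℝ) : ℝ :=
  deriv (fun s => deriv (fun t => F s t) y) x

theorem contDiff_apply_left {n : WithTop ℕ∞} (hF : ContDiff ℝ n (uncurry F)) (y : ℝ) :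
    ContDiff ℝ n (fun x => F x y) :=
  hF.comp (contDiff_id.prodMk contDiff_const)

theorem contDiff_apply_right {n : WithTop ℕ∞} (hF : ContDiff ℝ n (uncurry F)) (x : ℝ) :
    ContDiff ℝ n (F x) :=
  hF.comp (contDiff_const.prodMk contDiff_id)

theorem contDiff_deriv_apply_right (hF : ContDiff ℝ 2 (uncurry F)) (y : ℝ) :
    ContDiff ℝ 1 (fun x => deriv (F x) y) := by
  have hpartial : (fun x => deriv (F x) y) = fun x => fderiv ℝ (uncurry F) (x, y) (0, 1) := by
    funext x
    have hline : HasDerivAt (fun t : ℝ => (x, t)) ((0 : ℝ), (1 : ℝ)) y :=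
      (hasDerivAt_const y x).prodMk (hasDerivAt_id y)
    exact ((hF.differentiable two_ne_zero (x, y)).hasFDerivAt.comp_hasDerivAt y hline).deriv
  rw [hpartial]
  exact ((hF.fderiv_right (by norm_num)).comp (contDiff_id.prodMk contDiff_const)).clm_apply
    contDiff_const

theorem mixedPartial_comp {b : ℝ → ℝ} (hb : ContDiff ℝ 2 b) (hF : ContDiff ℝ 2 (uncurry F))
    (x y : ℝ) :
    mixedPartial (fun s t => b (F s t)) x y =
      deriv (deriv b) (F x y) * (deriv (fun t => F t y) x * deriv (fun t => F x t) y) +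
        deriv b (F x y) * mixedPartial F x y := by
  have hb' : ContDiff ℝ 1 (deriv b) := hb.deriv' (n := 1)
  have hchain :
      (fun s => deriv (fun t => b (F s t)) y) = fun s => deriv b (F s y) * deriv (F s) y := by
    funext s
    exact deriv_comp y (hb.differentiable two_ne_zero _)
      ((contDiff_apply_right hF s).differentiable two_ne_zero y)
  have hleft : HasDerivAt (fun s => deriv b (F s y))
      (deriv (deriv b) (F x y) * deriv (fun t => F t y) x) x :=
    (hb'.differentiable one_ne_zero _).hasDerivAt.comp x
      ((contDiff_apply_left hF y).differentiable two_ne_zero x).hasDerivAt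
  have hright : HasDerivAt (fun s => deriv (F s) y) (mixedPartial F x y) x :=
    ((contDiff_deriv_apply_right hF y).differentiable one_ne_zero x).hasDerivAt
  rw [mixedPartial, hchain]
  exact (hleft.mul hright).deriv.trans (by ring)

theorem mixedPartial_sub (hF : ContDiff ℝ 2 (uncurry F)) (hG : ContDiff ℝ 2 (uncurry G))
    (x y : ℝ) :
    mixedPartial (fun s t => F s t - G s t) x y = mixedPartial F x y - mixedPartial G x y := by
  have hpartial : (fun s => deriv (fun t => F s t - G s t) y) =
      fun s => deriv (F s) y - deriv (G s) y := by
    funext s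
    exact deriv_fun_sub ((contDiff_apply_right hF s).differentiable two_ne_zero y)
      ((contDiff_apply_right hG s).differentiable two_ne_zero y)
  rw [mixedPartial, hpartial]
  exact deriv_sub ((contDiff_deriv_apply_right hF y).differentiable one_ne_zero x)
    ((contDiff_deriv_apply_right hG y).differentiable one_ne_zero x)

theorem sub_eq_sub_of_mixedPartial_eq_zero (hG : ContDiff ℝ 2 (uncurry G))
    (hmixed : ∀ x y, mixedPartial G x y = 0) (x x' y y' : ℝ) :
    G x y - G x' y = G x y' - G x' y' := by
  have hpartial : ∀ t, deriv (G x) t = deriv (G x') t := fun t =>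
    is_const_of_deriv_eq_zero ((contDiff_deriv_apply_right hG t).differentiable one_ne_zero)
      (fun s => hmixed s t) x x'
  have hdiff : Differentiable ℝ (fun t => G x t - G x' t) :=
    ((contDiff_apply_right hG x).differentiable two_ne_zero).sub
      ((contDiff_apply_right hG x').differentiable two_ne_zero)
  refine is_const_of_deriv_eq_zero hdiff (fun t => ?_) y y'
  rw [deriv_fun_sub ((contDiff_apply_right hG x).differentiable two_ne_zero t)
    ((contDiff_apply_right hG x').differentiable two_ne_zero t), hpartial, sub_self]

end Partials

section PotentialGames

variable {α β : Type*} [TopologicalSpace α] [TopologicalSpace β] {S : Set α} {T : Set β}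
  {u₁ u₂ : α → β → ℝ} {w₁ w₂ : ℝ}

theorem exists_pureNash_of_weightedPotential (hS : IsCompact S) (hT : IsCompact T)
    (hS₀ : S.Nonempty) (hT₀ : T.Nonempty) {V : α × β → ℝ} (hV : ContinuousOn V (S ×ˢ T))
    (hw₁ : 0 < w₁) (hw₂ : 0 < w₂) (g₁ : β → ℝ) (g₂ : α → ℝ)
    (hu₁ : ∀ x y, u₁ x y = w₁ * V (x, y) + g₁ y) (hu₂ : ∀ x y, u₂ x y = w₂ * V (x, y) + g₂ x) :
    ∃ x ∈ S, ∃ y ∈ T, (∀ x' ∈ S, u₁ x' y ≤ u₁ x y) ∧ (∀ y' ∈ T, u₂ x y' ≤ u₂ x y) := by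
  obtain ⟨⟨x, y⟩, ⟨hx, hy⟩, hmax⟩ := (hS.prod hT).exists_isMaxOn (hS₀.prod hT₀) hV
  refine ⟨x, hx, y, hy, fun x' hx' => ?_, fun y' hy' => ?_⟩
  · have : V (x', y) ≤ V (x, y) := hmax (Set.mk_mem_prod hx' hy)
    rw [hu₁, hu₁]
    gcongr
  · have : V (x, y') ≤ V (x, y) := hmax (Set.mk_mem_prod hx hy')
    rw [hu₂, hu₂]
    gcongr

/-- `u₁ / w₁ + g` is a potential of the game with weights `w₁, w₂`. -/
theorem exists_pureNash_of_div_sub_div_eq_add (hS : IsCompact S) (hT : IsCompact T)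
    (hS₀ : S.Nonempty) (hT₀ : T.Nonempty) (hw₁ : 0 < w₁) (hw₂ : 0 < w₂) (f : α → ℝ)
    {g : β → ℝ} (hu₁ : ContinuousOn (uncurry u₁) (S ×ˢ T)) (hg : ContinuousOn g T)
    (hsep : ∀ x y, u₂ x y / w₂ - u₁ x y / w₁ = f x + g y) :
    ∃ x ∈ S, ∃ y ∈ T, (∀ x' ∈ S, u₁ x' y ≤ u₁ x y) ∧ (∀ y' ∈ T, u₂ x y' ≤ u₂ x y) := by
  refine exists_pureNash_of_weightedPotential hS hT hS₀ hT₀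
    (V := fun p => u₁ p.1 p.2 / w₁ + g p.2)
    ((hu₁.div_const w₁).add (hg.comp continuousOn_snd fun _ hp => hp.2)) hw₁ hw₂
    (fun y => -(w₁ * g y)) (fun x => w₂ * f x) (fun x y => ?_) (fun x y => ?_)
  · field_simp
    ring
  · have := hsep x y
    field_simp at this ⊢
    linarith

end PotentialGames

theorem col_potential_condition_NE_general
    (b : ℝ → ℝ → ℝ) (c : ℝ → ℝ) (Φ1 Φ2 : ℝ → ℝ → ℝ)
    (θ1 θ2 B1 B2 C1 C2 : ℝ) (hB1 : 0 < B1) (hB2 : 0 < B2)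
    (hb1 : ContDiff ℝ 2 (b θ1)) (hb2 : ContDiff ℝ 2 (b θ2))
    (hc : ContDiff ℝ 2 c)
    (hΦ1 : ContDiff ℝ 2 (fun p : ℝ × ℝ => Φ1 p.1 p.2))
    (hΦ2 : ContDiff ℝ 2 (fun p : ℝ × ℝ => Φ2 p.1 p.2))
    (u1 u2 : ℝ → ℝ → ℝ)
    (hu1 : ∀ p1 p2, u1 p1 p2 = B1 * b θ1 (Φ1 p1 p2) - C1 * c p1)
    (hu2 : ∀ p1 p2, u2 p1 p2 = B2 * b θ2 (Φ2 p1 p2) - C2 * c p2)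
    (hcond : ∀ p1 p2 : ℝ,
      deriv (deriv (b θ1)) (Φ1 p1 p2) *
          (deriv (fun t => Φ1 t p2) p1 * deriv (fun t => Φ1 p1 t) p2) -
        deriv (deriv (b θ2)) (Φ2 p1 p2) *
          (deriv (fun t => Φ2 t p2) p1 * deriv (fun t => Φ2 p1 t) p2) =
      deriv (b θ2) (Φ2 p1 p2) *
          deriv (fun s => deriv (fun t => Φ2 s t) p2) p1 -
        deriv (b θ1) (Φ1 p1 p2) *
          deriv (fun s => deriv (fun t => Φ1 s t) p2) p1) :
    ∃ p1 ∈ Set.Icc (0:ℝ) 1, ∃ p2 ∈ Set.Icc (0:ℝ) 1,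
      (∀ q1 ∈ Set.Icc (0:ℝ) 1, u1 q1 p2 ≤ u1 p1 p2) ∧
      (∀ q2 ∈ Set.Icc (0:ℝ) 1, u2 p1 q2 ≤ u2 p1 p2) := by
  have hF1 : ContDiff ℝ 2 (uncurry fun x y => b θ1 (Φ1 x y)) := hb1.comp hΦ1
  have hF2 : ContDiff ℝ 2 (uncurry fun x y => b θ2 (Φ2 x y)) := hb2.comp hΦ2
  set G : ℝ → ℝ → ℝ := fun x y => b θ2 (Φ2 x y) - b θ1 (Φ1 x y) with hG
  have hsep := sub_eq_sub_of_mixedPartial_eq_zero (G := G) (hF2.sub hF1) fun x y => by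
    rw [hG, mixedPartial_sub hF2 hF1, mixedPartial_comp hb2 hΦ2, mixedPartial_comp hb1 hΦ1]
    unfold mixedPartial
    linear_combination (hcond x y).symm
  -- `G x y = (G x 0 - G 0 0) + G 0 y`
  refine exists_pureNash_of_div_sub_div_eq_add isCompact_Icc isCompact_Icc
    (Set.nonempty_Icc.2 zero_le_one) (Set.nonempty_Icc.2 zero_le_one) hB1 hB2
    (fun x => G x 0 - G 0 0 + C1 / B1 * c x) (g := fun y => G 0 y - C2 / B2 * c y)
    ?_ ?_ fun x y => ?_
  · have hF1c := hF1.continuous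
    have hcc := hc.continuous
    refine Continuous.continuousOn ?_
    simp only [uncurry_def, hu1]
    fun_prop
  · exact ((contDiff_apply_right (hF2.sub hF1) 0).sub
      (contDiff_const.mul hc)).continuous.continuousOn
  · rw [hu1, hu2]
    field_simp
    linear_combination B1 * B2 * hsep x 0 y 0

/-- The Collaborative Learning game admits at least one pure-strategy Nash
Equilibrium provided the potential-game condition
  b''·(∂₁Φ₁·∂₂Φ₁ − ∂₁Φ₂·∂₂Φ₂) = b'·(∂²₁₂Φ₂ − ∂²₁₂Φ₁)
holds everywhere (with b', b'' the derivatives of the benefit with respect to Φ,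
evaluated at the respective Φₙ). -/
theorem col_potential_condition_NE
    (b : ℝ → ℝ → ℝ) (c : ℝ → ℝ) (Φ1 Φ2 : ℝ → ℝ → ℝ)
    (θ1 θ2 B1 B2 C1 C2 : ℝ) (hB1 : 0 < B1) (hB2 : 0 < B2) (hC1 : 0 ≤ C1) (hC2 : 0 ≤ C2)
    (hb1 : ContDiff ℝ 2 (b θ1)) (hb2 : ContDiff ℝ 2 (b θ2))
    (hc : ContDiff ℝ 2 c)
    (hΦ1 : ContDiff ℝ 2 (fun p : ℝ × ℝ => Φ1 p.1 p.2))
    (hΦ2 : ContDiff ℝ 2 (fun p : ℝ × ℝ => Φ2 p.1 p.2))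
    (u1 u2 : ℝ → ℝ → ℝ)
    (hu1 : ∀ p1 p2, u1 p1 p2 = B1 * b θ1 (Φ1 p1 p2) - C1 * c p1)
    (hu2 : ∀ p1 p2, u2 p1 p2 = B2 * b θ2 (Φ2 p1 p2) - C2 * c p2)
    (hcond : ∀ p1 p2 : ℝ,
      deriv (deriv (b θ1)) (Φ1 p1 p2) *
          (deriv (fun t => Φ1 t p2) p1 * deriv (fun t => Φ1 p1 t) p2) -
        deriv (deriv (b θ2)) (Φ2 p1 p2) *
          (deriv (fun t => Φ2 t p2) p1 * deriv (fun t => Φ2 p1 t) p2) =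
      deriv (b θ2) (Φ2 p1 p2) *
          deriv (fun s => deriv (fun t => Φ2 s t) p2) p1 -
        deriv (b θ1) (Φ1 p1 p2) *
          deriv (fun s => deriv (fun t => Φ1 s t) p2) p1) :
    ∃ p1 ∈ Set.Icc (0:ℝ) 1, ∃ p2 ∈ Set.Icc (0:ℝ) 1,
      (∀ q1 ∈ Set.Icc (0:ℝ) 1, u1 q1 p2 ≤ u1 p1 p2) ∧
      (∀ q2 ∈ Set.Icc (0:ℝ) 1, u2 p1 q2 ≤ u2 p1 p2) :=
  col_potential_condition_NE_general b c Φ1 Φ2 θ1 θ2 B1 B2 C1 C2 hB1 hB2 hb1 hb2 hc hΦ1 hΦ2 u1 u2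
    hu1 hu2 hcond
end

section
/- Laplace mechanism: for f: D → ℝ^k with ℓ1-sensitivity s = max over neighboring datasets D_1, D_2 of ||f(D_1) − f(D_2)||_1, the mechanism A(D) = f(D) + (Y_1, …, Y_k), where the Y_i are independent Laplace random variables with scale s/ε, is ε-differentially private. -/
open MeasureTheory

/-- Laplace mechanism.  For f : δ → ℝ^k with ℓ1-sensitivity s over
neighboring datasets, adding independent Laplace noise of scale s/ε to each coordinate
(joint density ∏ᵢ (ε/(2s))·exp(−ε|zᵢ − f(D)ᵢ|/s)) yields an ε-differentially private
mechanism: for any neighboring D₁, D₂ and measurable O ⊆ ℝ^k,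
Pr(A(D₁) ∈ O) ≤ e^ε · Pr(A(D₂) ∈ O). -/
theorem laplace_mechanism_dp
    {δ : Type*} {k : ℕ} (Neighbor : δ → δ → Prop)
    (f : δ → Fin k → ℝ) (s ε : ℝ) (hs : 0 < s) (hε : 0 < ε)
    (hsens : ∀ D1 D2 : δ, Neighbor D1 D2 → ∑ i, |f D1 i - f D2 i| ≤ s) :
    ∀ (D1 D2 : δ), Neighbor D1 D2 → ∀ O : Set (Fin k → ℝ), MeasurableSet O →
      (∫⁻ z in O, ENNReal.ofReal (∏ i, ε / (2 * s) * Real.exp (-(ε * |z i - f D1 i|) / s))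
          ∂(volume : Measure (Fin k → ℝ))) ≤
      ENNReal.ofReal (Real.exp ε) *
        ∫⁻ z in O, ENNReal.ofReal (∏ i, ε / (2 * s) * Real.exp (-(ε * |z i - f D2 i|) / s))
          ∂(volume : Measure (Fin k → ℝ)) := by
  intro D1 D2 hN O hO
  rw [← lintegral_const_mul' _ _ ENNReal.ofReal_ne_top]
  refine lintegral_mono fun z => ?_
  rw [← ENNReal.ofReal_mul (Real.exp_pos _).le]
  refine ENNReal.ofReal_le_ofReal ?_
  have hc : (0:ℝ) ≤ ε / (2 * s) := by positivity
  rw [Finset.prod_mul_distrib, Finset.prod_mul_distrib, ← Real.exp_sum, ← Real.exp_sum,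
    mul_comm (Real.exp ε), mul_assoc, ← Real.exp_add]
  refine mul_le_mul_of_nonneg_left ?_ (Finset.prod_nonneg fun i _ => hc)
  refine Real.exp_le_exp.mpr ?_
  rw [← sub_le_iff_le_add']
  have h1 : ∑ i, -(ε * |z i - f D1 i|) / s - ∑ i, -(ε * |z i - f D2 i|) / s
      = (ε / s) * ∑ i, (|z i - f D2 i| - |z i - f D1 i|) := by
    rw [← Finset.sum_sub_distrib, Finset.mul_sum]
    congr 1; ext i; field_simp; ring
  rw [h1]
  have h2 : ∑ i, (|z i - f D2 i| - |z i - f D1 i|) ≤ ∑ i, |f D1 i - f D2 i| := by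
    refine Finset.sum_le_sum fun i _ => ?_
    have := abs_sub_abs_le_abs_sub (z i - f D2 i) (z i - f D1 i)
    calc |z i - f D2 i| - |z i - f D1 i| ≤ |(z i - f D2 i) - (z i - f D1 i)| := this
      _ = |f D1 i - f D2 i| := by ring_nf
  calc (ε / s) * ∑ i, (|z i - f D2 i| - |z i - f D1 i|)
      ≤ (ε / s) * s := by
        refine mul_le_mul_of_nonneg_left ?_ (by positivity)
        exact h2.trans (hsens D1 D2 hN)
    _ = ε := by field_simp
end

section
/- In a finite potential game, from any initial strategy profile, every sequence of strict best-response updates (where at each step one player switches to a strategy strictly improving their utility, choosing a best response) terminates at a pure-strategy Nash Equilibrium after finitely many steps. -/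
/-- In a finite potential game, from any initial strategy profile, every
sequence of strict best-response updates (at each step one player switches to a strictly
improving best response, stopping once no player can improve) reaches a pure-strategy
Nash Equilibrium after finitely many steps. -/
theorem finite_potential_game_BR_dynamics_converge
    {ι : Type*} [Fintype ι] [DecidableEq ι]
    (S : ι → Type*) [∀ i, Fintype (S i)]
    (u : ι → (∀ i, S i) → ℝ) (P : (∀ i, S i) → ℝ)
    (hP : ∀ (i : ι) (s : ∀ j, S j) (s' : S i),
      u i (Function.update s i s') - u i s = P (Function.update s i s') - P s)
    (seq : ℕ → ∀ i, S i)
    -- if the current profile is not a NE, the next profile is a strict best-response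
    -- update by some player
    (hstep : ∀ t : ℕ,
      (¬ ∀ (i : ι) (s' : S i), u i (Function.update (seq t) i s') ≤ u i (seq t)) →
      ∃ (i : ι) (s' : S i),
        seq (t + 1) = Function.update (seq t) i s' ∧
        u i (seq t) < u i (seq (t + 1)) ∧
        ∀ s'' : S i, u i (Function.update (seq t) i s'') ≤ u i (seq (t + 1)))
    -- once a NE is reached the sequence stays there
    (hstay : ∀ t : ℕ,
      (∀ (i : ι) (s' : S i), u i (Function.update (seq t) i s') ≤ u i (seq t)) →
      seq (t + 1) = seq t) :
    ∃ T : ℕ, ∀ (i : ι) (s' : S i),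
      u i (Function.update (seq T) i s') ≤ u i (seq T) := by
  by_contra h
  push_neg at h
  -- P strictly increases along the sequence
  have hmono : StrictMono (fun t => P (seq t)) := by
    apply strictMono_nat_of_lt_succ
    intro t
    obtain ⟨i, s', hs', hlt, _⟩ := hstep t (by
      intro hne
      obtain ⟨j, s'', hgt⟩ := h t
      exact absurd (hne j s'') (not_le.mpr hgt))
    have := hP i (seq t) s'
    rw [← hs'] at this
    linarith
  have hinj : Function.Injective seq := fun a b hab => by
    by_contra hne
    rcases lt_or_gt_of_ne hne with hl | hl
    · exact absurd (congrArg P hab) (ne_of_lt (hmono hl))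
    · exact absurd (congrArg P hab.symm) (ne_of_lt (hmono hl))
  exact absurd hinj (not_injective_infinite_finite seq)
end
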